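/- Let G be a finite connected simple graph and let T be an uncle tree of G rooted at r. Let p_1, …, p_k be the leaves of T listed in the natural left-to-right order of the leaves of the plane tree T (the order in which they are visited by a depth-first traversal that visits the children of each vertex in their given linear order). For each i, let T_{p_i} denote the set of vertices on the path of T from r to p_i, and let X_i be the set of vertices of G that either belong to T_{p_i} or have an elder sibling belonging to T_{p_i}. Then (X_1, …, X_k) is a path-decomposition of G. -/

import Mathlib

variable {V : Type}

/-- `u` is an ancestor of `v` (possibly `u = v`) in the rooted tree given by
the parent function `parent`. -/
def Anc (parent : V → V) (u v : V) : Prop := ∃ k : ℕ, parent^[k] v = u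

/-- `u` is an elder sibling of `v`: both are non-root vertices with the same
parent, and `u` precedes `v` in the linear order (given by `rank`) on the
children of their common parent. -/
def Elder (parent : V → V) (rank : V → ℕ) (r u v : V) : Prop :=
  u ≠ r ∧ v ≠ r ∧ u ≠ v ∧ parent u = parent v ∧ rank u < rank v

/-- An uncle tree of `G` rooted at `r`: a spanning tree of `G` (encoded by a
parent function `parent` fixing the root `r`, with each tree edge `{v, parent v}`
an edge of `G`, and a `depth` function witnessing well-foundedness), together
with a linear order on the children of each vertex (encoded by `rank`, which is
injective on each set of siblings), such that for every edge `uv` of `G` that is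
not an edge of the tree, one of `u, v` has an elder sibling that is an ancestor
of the other. -/
structure UncleTree (G : SimpleGraph V) (r : V) where
  parent : V → V
  rank : V → ℕ
  depth : V → ℕ
  parent_root : parent r = r
  adj_parent : ∀ v, v ≠ r → G.Adj v (parent v)
  depth_root : depth r = 0
  depth_parent : ∀ v, v ≠ r → depth v = depth (parent v) + 1
  rank_injOn : ∀ u v, u ≠ r → v ≠ r → parent u = parent v → rank u = rank v → u = v
  uncle : ∀ u v, G.Adj u v → parent u = v ∨ parent v = u ∨
      (∃ w, Elder parent rank r w u ∧ Anc parent w v) ∨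
      (∃ w, Elder parent rank r w v ∧ Anc parent w u)


/-- `v` is a leaf of the rooted tree given by `parent`: it has no children. -/
def IsLeaf (parent : V → V) (v : V) : Prop := ∀ u, parent u = v → u = v

/-- Leaf `p` comes before leaf `q` in the natural left-to-right (depth-first)
order of the leaves of the plane tree: some ancestor of `p` is an elder sibling
of some ancestor of `q`. -/
def Before (parent : V → V) (rank : V → ℕ) (r p q : V) : Prop :=
  ∃ a b, Elder parent rank r a b ∧ Anc parent a p ∧ Anc parent b q


/-!
Call `bag q` the set of vertices that lie on the root path to `q` or have an elder sibling
on it. Every vertex lies in the bag of a leaf below it, and by the uncle property one endpoint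
of every edge lies in the bag of the other, hence both lie in the bag of any leaf below that
one. For the interpolation property, the leaves below a fixed vertex form an interval of the
left-to-right order, so if `v` lies in the bags of `q₁` and `q₃` then `parent v` lies on the
root path to every leaf `q₂` between them; the child of `parent v` on that path cannot be
younger than `v`, since otherwise `q₃` would come before `q₂`.
-/

variable {parent : V → V} {rank depth : V → ℕ} {r : V}

theorem Anc.refl (v : V) : Anc parent v v := ⟨0, rfl⟩

theorem anc_parent (v : V) : Anc parent (parent v) v := ⟨1, rfl⟩

theorem Anc.trans {a b c : V} (hab : Anc parent a b) (hbc : Anc parent b c) :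
    Anc parent a c := by
  obtain ⟨k, rfl⟩ := hab
  obtain ⟨l, rfl⟩ := hbc
  exact ⟨k + l, Function.iterate_add_apply parent k l c⟩

theorem Anc.total {a b x : V} (ha : Anc parent a x) (hb : Anc parent b x) :
    Anc parent a b ∨ Anc parent b a := by
  obtain ⟨k, rfl⟩ := ha
  obtain ⟨l, rfl⟩ := hb
  rcases le_total k l with h | h
  · exact Or.inr ⟨l - k, by rw [← Function.iterate_add_apply, Nat.sub_add_cancel h]⟩
  · exact Or.inl ⟨k - l, by rw [← Function.iterate_add_apply, Nat.sub_add_cancel h]⟩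

theorem Anc.anc_or_anc_parent {a f x : V} (hf : Anc parent f x) (ha : Anc parent a x) :
    Anc parent a f ∨ Anc parent f (parent a) := by
  rcases ha.total hf with h | ⟨_ | k, rfl⟩
  · exact Or.inl h
  · exact Or.inl (Anc.refl a)
  · exact Or.inr ⟨k, rfl⟩

theorem Elder.ne {a b : V} (h : Elder parent rank r a b) : a ≠ b := h.2.2.1

theorem Elder.parent_eq {a b : V} (h : Elder parent rank r a b) : parent a = parent b := h.2.2.2.1

theorem Elder.rank_lt {a b : V} (h : Elder parent rank r a b) : rank a < rank b := h.2.2.2.2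

def bag (parent : V → V) (rank : V → ℕ) (r q : V) : Set V :=
  {v | Anc parent v q ∨ ∃ w, Elder parent rank r w v ∧ Anc parent w q}

theorem bag_mono {x q : V} (h : Anc parent x q) : bag parent rank r x ⊆ bag parent rank r q := by
  rintro v (hv | ⟨w, hw, hwx⟩)
  exacts [Or.inl (hv.trans h), Or.inr ⟨w, hw, hwx.trans h⟩]

theorem anc_of_root_mem_bag {q : V} (h : r ∈ bag parent rank r q) : Anc parent r q := by
  rcases h with h | ⟨w, ⟨-, hr, -⟩, -⟩
  exacts [h, absurd rfl hr]

/-- `depth` certifies that iterating `parent` from any vertex reaches the fixed point `r`. -/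
structure IsRootedTree (parent : V → V) (depth : V → ℕ) (r : V) : Prop where
  parent_root : parent r = r
  depth_parent : ∀ v, v ≠ r → depth v = depth (parent v) + 1

namespace IsRootedTree

variable (ht : IsRootedTree parent depth r)
include ht

theorem parent_ne_self {v : V} (hv : v ≠ r) : parent v ≠ v := fun h => by
  have := ht.depth_parent v hv
  rw [h] at this
  omega

theorem depth_lt_of_anc {a b : V} (h : Anc parent a b) (hne : a ≠ b) : depth a < depth b := by
  obtain ⟨k, rfl⟩ := h
  induction k generalizing b with
  | zero => exact absurd rfl hne
  | succ k ih =>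
    have hb : b ≠ r := by
      rintro rfl
      exact hne (Function.iterate_fixed ht.parent_root _)
    rw [Function.iterate_succ_apply] at hne ⊢
    rw [ht.depth_parent b hb]
    by_cases h : parent^[k] (parent b) = parent b
    · rw [h]
      omega
    · exact (ih h).trans (Nat.lt_succ_self _)

theorem anc_antisymm {a b : V} (hab : Anc parent a b) (hba : Anc parent b a) : a = b := by
  by_contra hne
  exact lt_asymm (ht.depth_lt_of_anc hab hne) (ht.depth_lt_of_anc hba (Ne.symm hne))

theorem eq_of_parent_eq_of_anc {a c x : V} (hpar : parent a = parent c) (ha : a ≠ r)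
    (hc : c ≠ r) (hax : Anc parent a x) (hcx : Anc parent c x) : a = c := by
  have hdepth : depth a = depth c := by rw [ht.depth_parent a ha, ht.depth_parent c hc, hpar]
  by_contra hne
  rcases hax.total hcx with h | h
  · exact (ht.depth_lt_of_anc h hne).ne hdepth
  · exact (ht.depth_lt_of_anc h (Ne.symm hne)).ne hdepth.symm

theorem not_anc_of_elder {a b x : V} (h : Elder parent rank r a b) (ha : Anc parent a x) :
    ¬ Anc parent b x := fun hb =>
  h.ne (ht.eq_of_parent_eq_of_anc h.parent_eq h.1 h.2.1 ha hb)

theorem exists_child_anc {g x : V} (h : Anc parent g x) (hne : g ≠ x) :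
    ∃ c, c ≠ r ∧ parent c = g ∧ Anc parent c x := by
  obtain ⟨k, hk⟩ := h
  induction k generalizing x with
  | zero => exact absurd hk.symm hne
  | succ k ih =>
    rw [Function.iterate_succ_apply] at hk
    by_cases hpx : parent x = g
    · refine ⟨x, ?_, hpx, Anc.refl x⟩
      rintro rfl
      exact hne (hpx.symm.trans ht.parent_root)
    · obtain ⟨c, hcr, hcg, hcx⟩ := ih (Ne.symm hpx) hk
      exact ⟨c, hcr, hcg, hcx.trans (anc_parent x)⟩

theorem exists_leaf_anc [Finite V] (v : V) : ∃ q, IsLeaf parent q ∧ Anc parent v q := by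
  have : Nonempty {u // Anc parent v u} := ⟨⟨v, Anc.refl v⟩⟩
  obtain ⟨⟨q, hvq⟩, hmax⟩ := Finite.exists_max fun u : {u // Anc parent v u} => depth u
  refine ⟨q, fun u hu => ?_, hvq⟩
  by_contra hne
  have hur : u ≠ r := by
    rintro rfl
    exact hne (hu.symm.trans ht.parent_root).symm
  have hle : depth u ≤ depth q := hmax ⟨u, hvq.trans (hu ▸ anc_parent u)⟩
  have hdepth := ht.depth_parent u hur
  rw [hu] at hdepth
  omega

/-- A common ancestor of `x` and `y` lies above their branching point `parent a`. -/
theorem anc_parent_of_elder {a b c x y : V} (h : Elder parent rank r a b)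
    (hax : Anc parent a x) (hby : Anc parent b y) (hcx : Anc parent c x) (hcy : Anc parent c y) :
    Anc parent c (parent a) := by
  refine (hcx.anc_or_anc_parent hax).resolve_left fun hac => ?_
  exact ht.not_anc_of_elder h (hac.trans hcy) hby

theorem before_asymm {x y : V} (hxy : Before parent rank r x y) :
    ¬ Before parent rank r y x := by
  rintro ⟨a', b', h', ha'y, hb'x⟩
  obtain ⟨a, b, h, hax, hby⟩ := hxy
  have hpar : parent a = parent a' := ht.anc_antisymm
    (ht.anc_parent_of_elder h' ha'y hb'x (h.parent_eq ▸ (anc_parent b).trans hby)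
      ((anc_parent a).trans hax))
    (ht.anc_parent_of_elder h hax hby (h'.parent_eq ▸ (anc_parent b').trans hb'x)
      ((anc_parent a').trans ha'y))
  have hab' : a = b' := ht.eq_of_parent_eq_of_anc (hpar.trans h'.parent_eq) h.1 h'.2.1 hax hb'x
  have hba' : b = a' := ht.eq_of_parent_eq_of_anc (h.parent_eq.symm.trans hpar) h.2.1 h'.1 hby ha'y
  subst hab' hba'
  exact lt_asymm h.rank_lt h'.rank_lt

theorem anc_of_before_of_before {f x y z : V} (hfx : Anc parent f x) (hfz : Anc parent f z)
    (hxy : Before parent rank r x y) (hyz : Before parent rank r y z) : Anc parent f y := by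
  obtain ⟨a, b, h, hax, hby⟩ := hxy
  rcases hfx.anc_or_anc_parent hax with haf | hfa
  · exact absurd ⟨a, b, h, haf.trans hfz, hby⟩ (ht.before_asymm hyz)
  · exact hfa.trans (h.parent_eq ▸ (anc_parent b).trans hby)

end IsRootedTree

namespace UncleTree

variable {G : SimpleGraph V} (T : UncleTree G r)

theorem isRootedTree : IsRootedTree T.parent T.depth r := ⟨T.parent_root, T.depth_parent⟩

theorem mem_bag_iff {v q : V} (hv : v ≠ r) :
    v ∈ bag T.parent T.rank r q ↔
      ∃ c, c ≠ r ∧ T.parent c = T.parent v ∧ T.rank c ≤ T.rank v ∧ Anc T.parent c q := by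
  constructor
  · rintro (h | ⟨w, ⟨hwr, -, -, hpar, hrank⟩, hw⟩)
    exacts [⟨v, hv, rfl, le_rfl, h⟩, ⟨w, hwr, hpar, hrank.le, hw⟩]
  · rintro ⟨c, hcr, hpar, hrank, hc⟩
    rcases hrank.lt_or_eq with hlt | heq
    · exact Or.inr ⟨c, ⟨hcr, hv, ne_of_apply_ne T.rank hlt.ne, hpar, hlt⟩, hc⟩
    · exact Or.inl (T.rank_injOn c v hcr hv hpar heq ▸ hc)

theorem mem_bag_or_mem_bag_of_adj {u v : V} (h : G.Adj u v) :
    u ∈ bag T.parent T.rank r v ∨ v ∈ bag T.parent T.rank r u := by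
  rcases T.uncle u v h with h | h | ⟨w, hw, hwv⟩ | ⟨w, hw, hwu⟩
  · exact Or.inr (Or.inl (h ▸ anc_parent u))
  · exact Or.inl (Or.inl (h ▸ anc_parent v))
  · exact Or.inl (Or.inr ⟨w, hw, hwv⟩)
  · exact Or.inr (Or.inr ⟨w, hw, hwu⟩)

theorem exists_leaf_mem_bag_of_adj [Finite V] {u v : V} (h : G.Adj u v) :
    ∃ q, IsLeaf T.parent q ∧ u ∈ bag T.parent T.rank r q ∧ v ∈ bag T.parent T.rank r q := by
  wlog huv : u ∈ bag T.parent T.rank r v generalizing u v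
  · obtain ⟨q, hq, hvq, huq⟩ :=
      this h.symm ((T.mem_bag_or_mem_bag_of_adj h).resolve_left huv)
    exact ⟨q, hq, huq, hvq⟩
  obtain ⟨q, hq, hvq⟩ := T.isRootedTree.exists_leaf_anc v
  exact ⟨q, hq, bag_mono hvq huv, Or.inl hvq⟩

theorem bag_inter_subset {q₁ q₂ q₃ : V} (hq₂ : IsLeaf T.parent q₂)
    (h₁₂ : Before T.parent T.rank r q₁ q₂) (h₂₃ : Before T.parent T.rank r q₂ q₃) :
    bag T.parent T.rank r q₁ ∩ bag T.parent T.rank r q₃ ⊆ bag T.parent T.rank r q₂ := by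
  have ht := T.isRootedTree
  rintro v ⟨hv₁, hv₃⟩
  by_cases hv : v = r
  · subst hv
    exact Or.inl (ht.anc_of_before_of_before (anc_of_root_mem_bag hv₁)
      (anc_of_root_mem_bag hv₃) h₁₂ h₂₃)
  obtain ⟨c₁, -, hc₁, -, hc₁q⟩ := (T.mem_bag_iff hv).1 hv₁
  obtain ⟨c₃, hc₃r, hc₃, hc₃rank, hc₃q⟩ := (T.mem_bag_iff hv).1 hv₃
  have hpv : Anc T.parent (T.parent v) q₂ := ht.anc_of_before_of_before
    (hc₁ ▸ (anc_parent c₁).trans hc₁q) (hc₃ ▸ (anc_parent c₃).trans hc₃q) h₁₂ h₂₃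
  have hne : T.parent v ≠ q₂ := fun h => ht.parent_ne_self hv (h.trans (hq₂ v h).symm)
  obtain ⟨c₂, hc₂r, hc₂, hc₂q⟩ := ht.exists_child_anc hpv hne
  refine (T.mem_bag_iff hv).2 ⟨c₂, hc₂r, hc₂, not_lt.1 fun hlt => ?_, hc₂q⟩
  -- otherwise `c₃` is an elder sibling of `c₂`, putting `q₃` before `q₂`
  refine ht.before_asymm h₂₃ ⟨c₃, c₂, ⟨hc₃r, hc₂r, ?_, hc₃.trans hc₂.symm, by omega⟩, hc₃q, hc₂q⟩
  exact ne_of_apply_ne T.rank (by omega)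

end UncleTree

theorem uncleTree_pathDecomposition_general [Fintype V] (G : SimpleGraph V)
    (r : V) (T : UncleTree G r) (k : ℕ) (p : Fin k → V)
    (hleaves : ∀ v : V, IsLeaf T.parent v ↔ ∃ i, p i = v)
    (hord : ∀ i j : Fin k, i < j → Before T.parent T.rank r (p i) (p j))
    (X : Fin k → Set V)
    (hX : ∀ i, X i = {v : V | Anc T.parent v (p i) ∨
      ∃ w, Elder T.parent T.rank r w v ∧ Anc T.parent w (p i)}) :
    (∀ v : V, ∃ i, v ∈ X i) ∧
    (∀ u v : V, G.Adj u v → ∃ i, u ∈ X i ∧ v ∈ X i) ∧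
    (∀ l i j : Fin k, l ≤ i → i ≤ j → X l ∩ X j ⊆ X i) := by
  obtain rfl : X = fun i => bag T.parent T.rank r (p i) := funext hX
  refine ⟨fun v => ?_, fun u v huv => ?_, fun l i j hli hij => ?_⟩
  · obtain ⟨q, hq, hvq⟩ := T.isRootedTree.exists_leaf_anc v
    obtain ⟨i, rfl⟩ := (hleaves q).1 hq
    exact ⟨i, Or.inl hvq⟩
  · obtain ⟨q, hq, huq, hvq⟩ := T.exists_leaf_mem_bag_of_adj huv
    obtain ⟨i, rfl⟩ := (hleaves q).1 hq
    exact ⟨i, huq, hvq⟩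
  · rcases hli.eq_or_lt with rfl | hli
    · exact Set.inter_subset_left
    rcases hij.eq_or_lt with rfl | hij
    · exact Set.inter_subset_right
    exact T.bag_inter_subset ((hleaves _).2 ⟨i, rfl⟩) (hord l i hli) (hord i j hij)

/-- Let `G` be a finite connected simple graph and `T` an uncle
tree of `G` rooted at `r`. List the leaves of `T` as `p 1, …, p k` in the
natural left-to-right order of the leaves of the plane tree `T`. For each `i`
let `X i` be the set of vertices that either lie on the path of `T` from `r` to
`p i`, or have an elder sibling lying on this path. Then `(X 1, …, X k)` is a
path-decomposition of `G`. -/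
theorem uncleTree_pathDecomposition [Fintype V] (G : SimpleGraph V) (hG : G.Connected)
    (r : V) (T : UncleTree G r) (k : ℕ) (p : Fin k → V)
    (hinj : Function.Injective p)
    (hleaves : ∀ v : V, IsLeaf T.parent v ↔ ∃ i, p i = v)
    (hord : ∀ i j : Fin k, i < j → Before T.parent T.rank r (p i) (p j))
    (X : Fin k → Set V)
    (hX : ∀ i, X i = {v : V | Anc T.parent v (p i) ∨
      ∃ w, Elder T.parent T.rank r w v ∧ Anc T.parent w (p i)}) :
    (∀ v : V, ∃ i, v ∈ X i) ∧
    (∀ u v : V, G.Adj u v → ∃ i, u ∈ X i ∧ v ∈ X i) ∧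
    (∀ l i j : Fin k, l ≤ i → i ≤ j → X l ∩ X j ⊆ X i) :=
  uncleTree_pathDecomposition_general G r T k p hleaves hord X hX
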